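/- Let V be a finite-dimensional real vector space with complex structure J and h ⊆ gl(V) commuting with J, with V_ℂ = W ⊕ W̄ as above. Then for any R ∈ K(h_ℂ), any ū ∈ W̄ and v, w ∈ W, one has R(ū, v)w = R(ū, w)v; i.e., for fixed ū the map v ↦ R(ū, ·)|_W is a symmetric element of the first prolongation of h_ℂ|_W. -/

import Mathlib

open TensorProduct

attribute [local instance 100] LieRing.ofAssociativeRing

/-- The complexification `𝔥_ℂ ⊆ End_ℂ(V ⊗ ℂ)` of a real Lie subalgebra `𝔥 ⊆ End_ℝ(V)`. -/
noncomputable def complexifySubalgebra {V : Type*} [AddCommGroup V] [Module ℝ V]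
    (h : LieSubalgebra ℝ (Module.End ℝ V)) :
    LieSubalgebra ℂ (Module.End ℂ (ℂ ⊗[ℝ] V)) :=
  LieSubalgebra.lieSpan ℂ (Module.End ℂ (ℂ ⊗[ℝ] V))
    ((fun A : Module.End ℝ V => LinearMap.baseChange ℂ A) ''
      (h : Set (Module.End ℝ V)))

/-- `W = {x + iJx | x ∈ V} ⊆ V_ℂ`. -/
noncomputable def Wplus {V : Type*} [AddCommGroup V] [Module ℝ V]
    (J : Module.End ℝ V) : Submodule ℂ (ℂ ⊗[ℝ] V) :=
  Submodule.span ℂ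
    {z : ℂ ⊗[ℝ] V | ∃ x : V, z = (1 : ℂ) ⊗ₜ[ℝ] x + Complex.I • ((1 : ℂ) ⊗ₜ[ℝ] (J x))}

/-- `W̄ = {x − iJx | x ∈ V} ⊆ V_ℂ`. -/
noncomputable def Wminus {V : Type*} [AddCommGroup V] [Module ℝ V]
    (J : Module.End ℝ V) : Submodule ℂ (ℂ ⊗[ℝ] V) :=
  Submodule.span ℂ
    {z : ℂ ⊗[ℝ] V | ∃ x : V, z = (1 : ℂ) ⊗ₜ[ℝ] x - Complex.I • ((1 : ℂ) ⊗ₜ[ℝ] (J x))}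

/-- `W` is the `-i` eigenspace of `J_ℂ` (when `J² = -1`). -/
lemma Wplus_eigen {V : Type*} [AddCommGroup V] [Module ℝ V]
    (J : Module.End ℝ V) (hJ : ∀ x : V, J (J x) = -x) :
    ∀ z ∈ Wplus J, LinearMap.baseChange ℂ J z = (-Complex.I) • z := by
  intro z hz
  induction hz using Submodule.span_induction with
  | mem z hz =>
      obtain ⟨x, rfl⟩ := hz
      simp only [map_add, map_smul, LinearMap.baseChange_tmul, hJ, tmul_neg, smul_add,
        smul_smul, smul_neg]
      simp only [smul_smul, neg_smul, one_smul, neg_mul, Complex.I_mul_I]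
      module
  | zero => simp
  | add a b _ _ ha hb => rw [map_add, ha, hb, smul_add]
  | smul c a _ ha => rw [map_smul, ha, smul_comm]

/-- `W̄` is the `+i` eigenspace of `J_ℂ` (when `J² = -1`). -/
lemma Wminus_eigen {V : Type*} [AddCommGroup V] [Module ℝ V]
    (J : Module.End ℝ V) (hJ : ∀ x : V, J (J x) = -x) :
    ∀ z ∈ Wminus J, LinearMap.baseChange ℂ J z = Complex.I • z := by
  intro z hz
  induction hz using Submodule.span_induction with
  | mem z hz =>
      obtain ⟨x, rfl⟩ := hz
      simp only [map_sub, map_smul, LinearMap.baseChange_tmul, hJ, tmul_neg, smul_sub,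
        smul_smul, smul_neg]
      simp only [smul_smul, neg_smul, one_smul, neg_mul, Complex.I_mul_I]
      module
  | zero => simp
  | add a b _ _ ha hb => rw [map_add, ha, hb, smul_add]
  | smul c a _ ha => rw [map_smul, ha, smul_comm]

/-- `W ∩ W̄ = 0`. -/
lemma Wplus_inf_Wminus {V : Type*} [AddCommGroup V] [Module ℝ V]
    (J : Module.End ℝ V) (hJ : ∀ x : V, J (J x) = -x)
    {z : ℂ ⊗[ℝ] V} (h1 : z ∈ Wplus J) (h2 : z ∈ Wminus J) : z = 0 := by
  have e1 := Wplus_eigen J hJ z h1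
  have e2 := Wminus_eigen J hJ z h2
  have : ((2 : ℂ) * Complex.I) • z = 0 := by
    have : Complex.I • z - (-Complex.I) • z = 0 := by rw [← e1, ← e2, sub_self]
    rw [← this]; module
  rcases smul_eq_zero.mp this with hc | hz
  · exact absurd hc (by simp [Complex.I_ne_zero])
  · exact hz

/-- The Lie subalgebra of endomorphisms of `V_ℂ` preserving both `W` and `W̄`. -/
noncomputable def stabWW {V : Type*} [AddCommGroup V] [Module ℝ V]
    (J : Module.End ℝ V) : LieSubalgebra ℂ (Module.End ℂ (ℂ ⊗[ℝ] V)) where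
  carrier := {A | (∀ z ∈ Wplus J, A z ∈ Wplus J) ∧ (∀ z ∈ Wminus J, A z ∈ Wminus J)}
  add_mem' := by
    rintro A B ⟨hA1, hA2⟩ ⟨hB1, hB2⟩
    exact ⟨fun z hz => by simpa using (Wplus J).add_mem (hA1 z hz) (hB1 z hz),
      fun z hz => by simpa using (Wminus J).add_mem (hA2 z hz) (hB2 z hz)⟩
  zero_mem' := ⟨fun z _ => by simp, fun z _ => by simp⟩
  smul_mem' := by
    rintro c A ⟨hA1, hA2⟩
    exact ⟨fun z hz => by simpa using (Wplus J).smul_mem c (hA1 z hz),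
      fun z hz => by simpa using (Wminus J).smul_mem c (hA2 z hz)⟩
  lie_mem' := by
    rintro A B ⟨hA1, hA2⟩ ⟨hB1, hB2⟩
    refine ⟨fun z hz => ?_, fun z hz => ?_⟩
    · have : ⁅A, B⁆ z = A (B z) - B (A z) := by
        simp [Ring.lie_def, LinearMap.sub_apply, Module.End.mul_apply]
      rw [this]
      exact (Wplus J).sub_mem (hA1 _ (hB1 z hz)) (hB1 _ (hA1 z hz))
    · have : ⁅A, B⁆ z = A (B z) - B (A z) := by
        simp [Ring.lie_def, LinearMap.sub_apply, Module.End.mul_apply]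
      rw [this]
      exact (Wminus J).sub_mem (hA2 _ (hB2 z hz)) (hB2 _ (hA2 z hz))

/-- Elements of `𝔥_ℂ` preserve both `W` and `W̄` when `𝔥` commutes with `J`. -/
lemma complexify_preserves {V : Type*} [AddCommGroup V] [Module ℝ V]
    (J : Module.End ℝ V) (h : LieSubalgebra ℝ (Module.End ℝ V))
    (hcomm : ∀ A ∈ h, ∀ x : V, A (J x) = J (A x)) :
    complexifySubalgebra h ≤ stabWW J := by
  rw [complexifySubalgebra]
  apply LieSubalgebra.lieSpan_le.mpr
  rintro _ ⟨A, hA, rfl⟩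
  constructor
  · intro z hz
    induction hz using Submodule.span_induction with
    | mem z hz =>
        obtain ⟨x, rfl⟩ := hz
        simp only [map_add, map_smul, LinearMap.baseChange_tmul, hcomm A hA]
        exact Submodule.subset_span ⟨A x, rfl⟩
    | zero => simp
    | add a b _ _ ha hb => rw [map_add]; exact (Wplus J).add_mem ha hb
    | smul c a _ ha => rw [map_smul]; exact (Wplus J).smul_mem c ha
  · intro z hz
    induction hz using Submodule.span_induction with
    | mem z hz =>
        obtain ⟨x, rfl⟩ := hz
        simp only [map_sub, map_smul, LinearMap.baseChange_tmul, hcomm A hA]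
        exact Submodule.subset_span ⟨A x, rfl⟩
    | zero => simp
    | add a b _ _ ha hb => rw [map_add]; exact (Wminus J).add_mem ha hb
    | smul c a _ ha => rw [map_smul]; exact (Wminus J).smul_mem c ha

/-- if `J` is a complex structure on the real vector space `V` commuting
with the elements of `𝔥`, then for any formal curvature map `R ∈ K(𝔥_ℂ)`, any
`ū ∈ W̄` and any `v, w ∈ W` one has `R(ū,v)w = R(ū,w)v`; i.e. `R(ū,·)|_W` is a
symmetric element of the first prolongation of `𝔥_ℂ|_W`. -/
theorem curvature_symmetric_on_conjugate_argument
    {V : Type*} [AddCommGroup V] [Module ℝ V] [FiniteDimensional ℝ V]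
    (J : Module.End ℝ V) (hJ : ∀ x : V, J (J x) = -x)
    (h : LieSubalgebra ℝ (Module.End ℝ V))
    (hcomm : ∀ A ∈ h, ∀ x : V, A (J x) = J (A x))
    (R : (ℂ ⊗[ℝ] V) →ₗ[ℂ] (ℂ ⊗[ℝ] V) →ₗ[ℂ] Module.End ℂ (ℂ ⊗[ℝ] V))
    (hmem : ∀ x y, R x y ∈ complexifySubalgebra h)
    (halt : ∀ x, R x x = 0)
    (hbianchi : ∀ x y z, R x y z + R y z x + R z x y = 0) :
    ∀ u ∈ Wminus J, ∀ v ∈ Wplus J, ∀ w ∈ Wplus J, R u v w = R u w v := by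
  intro u hu v hv w hw
  have hstab : ∀ x y, R x y ∈ stabWW J := fun x y =>
    complexify_preserves J h hcomm (hmem x y)
  -- antisymmetry in the first two arguments
  have hanti : ∀ x y, R x y = - R y x := by
    intro x y
    have h1 := halt (x + y)
    simp only [map_add, LinearMap.add_apply, halt] at h1
    linear_combination (norm := abel) h1
  -- the key vanishing: R(v, w) u = 0 for v, w ∈ W, u ∈ W̄
  have hkey : R v w u = 0 := by
    have hmem1 : R v w u ∈ Wminus J := (hstab v w).2 u hu
    have hmem2 : R v w u ∈ Wplus J := by
      have hb := hbianchi v w u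
      have : R v w u = -(R w u v) - (R u v w) := by linear_combination (norm := abel) hb
      rw [this]
      exact (Wplus J).sub_mem ((Wplus J).neg_mem ((hstab w u).1 v hv)) ((hstab u v).1 w hw)
    exact Wplus_inf_Wminus J hJ hmem2 hmem1
  -- conclude via Bianchi
  have hb := hbianchi v w u
  rw [hkey] at hb
  -- hb : 0 + R w u v + R u v w = 0
  have h2 : R w u v = - R u v w := by linear_combination (norm := abel) hb
  rw [hanti u w]
  simp only [LinearMap.neg_apply, map_neg]
  rw [h2]
  simp
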